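/- arXiv:1412.5310 — 4 statements merged into one kernel-verified Lean document; each statement's English description precedes it below -/
import Mathlib

section
/- For every q ≥ 2 and every digraph G, if the q-guessing number g(G,q) ≥ 1 then the q-strict guessing number h(G,q) ≥ 1; i.e., if some coding function over an alphabet of size q whose interaction graph is a subgraph of G has at least q fixed points, then some coding function with interaction graph exactly G has at least q fixed points. -/
/-- Arc `(u,i)` of the interaction graph of a coding function `f`. -/
def arcCF {V A : Type*} [DecidableEq V] (f : (V → A) → V → A) (u i : V) : Prop :=
  ∃ (x : V → A) (a : A), f (Function.update x u a) i ≠ f x i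

/-!
A coding function whose interaction graph is acyclic has at most one fixed point, since the value
of a fixed point at `i` is determined by its values at the predecessors of `i`. Hence `G` is not
well-founded, and the set `R` of vertices that are not accessible in `G` is nonempty. Every vertex
of `R` has an in-neighbour in `R`, while all in-neighbours of a vertex outside `R` lie outside `R`.
Fix `a₀ ≠ a₁` and let each `i ∈ R` copy a chosen in-neighbour in `R`, while each `i ∉ R` copies the
constant `a₀`, except that the output is `a₁` as soon as another in-neighbour carries a value other
than `a₀` and the copied one. Every arc of `G` is then visible, and the `|A|` configurations that
are constant on `R` and equal to `a₀` elsewhere are fixed.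
-/

section

variable {V A : Type*}

theorem apply_eq_of_forall_arcCF [Fintype V] [DecidableEq V] (f : (V → A) → V → A) {i : V}
    {x y : V → A} (h : ∀ u, arcCF f u i → x u = y u) : f x i = f y i := by
  suffices key : ∀ (s : Finset V) (x : V → A), (∀ u, arcCF f u i → x u = y u) →
      (∀ u ∉ s, x u = y u) → f x i = f y i from
    key Finset.univ x h fun u hu => absurd (Finset.mem_univ u) hu
  intro s
  induction s using Finset.induction_on with
  | empty => exact fun x _ hs => by rw [funext fun u => hs u (Finset.notMem_empty u)]
  | insert a s _ ih =>
    intro x hx hs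
    have hupdate : f (Function.update x a (y a)) i = f x i := by
      by_contra hne
      rw [← hx a ⟨x, y a, hne⟩, Function.update_eq_self] at hne
      exact hne rfl
    rw [← hupdate]
    refine ih _ (fun u hu => ?_) (fun u hu => ?_) <;>
      rcases eq_or_ne u a with rfl | hua
    all_goals simp_all [Function.update_of_ne]

theorem fixedPoints_subsingleton_of_wellFounded [Fintype V] [DecidableEq V] {G : V → V → Prop}
    (hG : WellFounded G) {f : (V → A) → V → A} (hf : ∀ u i, arcCF f u i → G u i) :
    {x : V → A | f x = x}.Subsingleton := by
  intro x hx y hy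
  funext i
  induction i using hG.induction with
  | _ i ih =>
    calc x i = f x i := (congrFun hx i).symm
      _ = f y i := apply_eq_of_forall_arcCF f fun u hu => ih u (hf u i hu)
      _ = y i := congrFun hy i

open Classical in
noncomputable def copyPred (G : V → V → Prop) (p : V → Option V) (a₀ a₁ : A) (x : V → A)
    (i : V) : A :=
  if ∃ u, G u i ∧ p i ≠ some u ∧ x u ≠ a₀ ∧ x u ≠ (p i).elim a₀ x then a₁ else (p i).elim a₀ x

variable {G : V → V → Prop} {p : V → Option V} {a₀ a₁ : A}

theorem copyPred_congr (hpG : ∀ i v, p i = some v → G v i) {i : V} {x y : V → A}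
    (h : ∀ u, G u i → x u = y u) : copyPred G p a₀ a₁ x i = copyPred G p a₀ a₁ y i := by
  have hb : (p i).elim a₀ x = (p i).elim a₀ y := by
    cases hpi : p i with
    | none => rfl
    | some v => exact h v (hpG i v hpi)
  unfold copyPred
  rw [hb]
  congr 1
  exact propext <| exists_congr fun u => and_congr_right fun hu => by rw [h u hu]

theorem arcCF_copyPred_iff [DecidableEq V] (hpG : ∀ i v, p i = some v → G v i) (ha : a₀ ≠ a₁)
    (u i : V) :
    arcCF (copyPred G p a₀ a₁) u i ↔ G u i := by
  constructor
  · rintro ⟨x, a, hne⟩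
    by_contra hui
    refine hne (copyPred_congr hpG fun v hv => ?_)
    exact Function.update_of_ne (by rintro rfl; exact hui hv) _ _
  · intro hui
    refine ⟨fun _ => a₀, a₁, ?_⟩
    by_cases hpi : p i = some u
    · simp [copyPred, hpi, ha.symm]
    · have hb : (p i).elim a₀ (Function.update (fun _ => a₀) u a₁) = a₀ := by
        cases hpi' : p i with
        | none => rfl
        | some v =>
          exact Function.update_of_ne (show v ≠ u by rintro rfl; exact hpi hpi') a₁ fun _ => a₀
      have hb₀ : (p i).elim a₀ (fun _ => a₀) = a₀ := by cases p i <;> rfl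
      rw [copyPred, copyPred, hb, hb₀, if_pos ⟨u, hui, hpi, by simp [ha.symm]⟩, if_neg (by simp)]
      exact ha.symm

theorem copyPred_piecewise_const {R : Set V} [DecidablePred (· ∈ R)]
    (hpR : ∀ i ∈ R, ∃ v ∈ R, p i = some v) (hpRc : ∀ i ∉ R, p i = none)
    (hR : ∀ u i, G u i → u ∈ R → i ∈ R) (t : A) :
    copyPred G p a₀ a₁ (R.piecewise (fun _ => t) fun _ => a₀) =
      R.piecewise (fun _ => t) fun _ => a₀ := by
  funext i
  have hbase : (p i).elim a₀ (R.piecewise (fun _ => t) fun _ => a₀) =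
      R.piecewise (fun _ => t) (fun _ => a₀) i := by
    by_cases hi : i ∈ R
    · obtain ⟨v, hv, hpi⟩ := hpR i hi
      simp [hpi, hv, hi]
    · simp [hpRc i hi, hi]
  rw [copyPred, hbase, if_neg]
  rintro ⟨u, hui, -, hu₀, hub⟩
  by_cases hu : u ∈ R
  · simp [hu, hR u i hui hu] at hub
  · simp [hu] at hu₀

theorem exists_arcCF_iff_and_card_le_ncard_of_not_wellFounded [Fintype V] [DecidableEq V]
    [Fintype A] (hA : 2 ≤ Fintype.card A) (hG : ¬WellFounded G) :
    ∃ f : (V → A) → V → A, (∀ u i, arcCF f u i ↔ G u i) ∧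
      Fintype.card A ≤ Set.ncard {x : V → A | f x = x} := by
  classical
  obtain ⟨a₀, a₁, ha⟩ := Fintype.exists_pair_of_one_lt_card hA
  set R : Set V := {i | ¬Acc G i}
  obtain ⟨i₀, hi₀⟩ : R.Nonempty := by
    by_contra hR
    exact hG ⟨fun i => by_contra fun hi => hR ⟨i, hi⟩⟩
  have hpred : ∀ i ∈ R, ∃ v ∈ R, G v i := fun i hi => by
    by_contra h
    exact hi ⟨i, fun v hv => by_contra fun hv' => h ⟨v, hv', hv⟩⟩
  have hR : ∀ u i, G u i → u ∈ R → i ∈ R := fun u i hui hu hi => hu (hi.inv hui)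
  choose! q hqR hqG using hpred
  set p : V → Option V := fun i => if i ∈ R then some (q i) else none
  have hpG : ∀ i v, p i = some v → G v i := by
    intro i v hpi
    by_cases hi : i ∈ R
    · simp only [p, if_pos hi, Option.some_inj] at hpi
      exact hpi ▸ hqG i hi
    · simp [p, hi] at hpi
  refine ⟨copyPred G p a₀ a₁, arcCF_copyPred_iff hpG ha, ?_⟩
  set ψ : A → V → A := fun t => R.piecewise (fun _ => t) fun _ => a₀
  have hψ : Function.Injective ψ := fun s t hst => by simpa [ψ, hi₀] using congrFun hst i₀
  have hfix : Set.range ψ ⊆ {x | copyPred G p a₀ a₁ x = x} := by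
    rintro _ ⟨t, rfl⟩
    exact copyPred_piecewise_const (fun i hi => ⟨q i, hqR i hi, if_pos hi⟩)
      (fun i hi => if_neg hi) hR t
  calc Fintype.card A = (Set.range ψ).ncard := by
        rw [Set.ncard_range_of_injective hψ, Nat.card_eq_fintype_card]
    _ ≤ _ := Set.ncard_le_ncard hfix

end

/-- If some coding function over an alphabet `A` of size `q ≥ 2` whose interaction
graph is a subgraph of `G` has at least `q` fixed points (i.e. `g(G,q) ≥ 1`), then
some coding function with interaction graph exactly `G` has at least `q` fixed
points (i.e. `h(G,q) ≥ 1`). -/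
theorem stmt12 {V A : Type*} [Fintype V] [DecidableEq V] [Fintype A]
    (G : V → V → Prop) (hq : 2 ≤ Fintype.card A)
    (h : ∃ f : (V → A) → V → A, (∀ u i, arcCF f u i → G u i) ∧
      Fintype.card A ≤ Set.ncard {x : V → A | f x = x}) :
    ∃ f : (V → A) → V → A, (∀ u i, arcCF f u i ↔ G u i) ∧
      Fintype.card A ≤ Set.ncard {x : V → A | f x = x} := by
  obtain ⟨f, hf, hcard⟩ := h
  refine exists_arcCF_iff_and_card_le_ncard_of_not_wellFounded hq fun hG => ?_
  have := Set.ncard_le_one_iff_subsingleton.2 (fixedPoints_subsingleton_of_wellFounded hG hf)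
  omega
end

section
/- For any loopless digraph G on n vertices and every q ≥ 2: h(G°,q) ≥ log_q( n(q−1)^{n−1} + (q−1)^n ); consequently h(G°,q) → n as q → ∞. -/
/-- Maximum number of fixed points of a coding function over an alphabet of size `q`
with interaction graph exactly `G`; `h(G,q)` is its `log_q`. -/
noncomputable def maxFixEq {V : Type*} [Fintype V] [DecidableEq V]
    (G : V → V → Prop) (q : ℕ) : ℕ :=
  sSup {n : ℕ | ∃ f : (V → Fin q) → V → Fin q,
    (∀ u i, arcCF f u i ↔ G u i) ∧ n = Set.ncard {x | f x = x}}

/-!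
Fix two symbols `z ≠ o`. Let each vertex keep its value unless it holds `z` and so does one of
its in-neighbours in `G`, in which case it switches to `o`. Vertex `i` then depends exactly on
itself and its in-neighbours, so the interaction graph is `G°`, and every configuration whose
`z`-set is independent in `G` is fixed. Since `G` is loopless, this includes the
`n(q-1)^(n-1) + (q-1)^n` configurations with at most one `z`. Squeezing
`(q-1)^n ≤ maxFixEq ≤ q^n` gives `n log_q (q-1) ≤ h(G°,q) ≤ n`, and `log_q (q-1) → 1`.
-/

open Filter Topology Finset

section IndepZeroCode

variable {V A : Type*} {G : V → V → Prop} {z o : A}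

open Classical in
noncomputable def indepZeroCode (G : V → V → Prop) (z o : A) (x : V → A) (i : V) : A :=
  if x i = z ∧ ∃ u, G u i ∧ x u = z then o else x i

lemma indepZeroCode_congr {x y : V → A} {i : V} (hi : y i = x i)
    (hnbr : ∀ w, G w i → y w = x w) :
    indepZeroCode G z o y i = indepZeroCode G z o x i := by
  have hzeros : (∃ u, G u i ∧ y u = z) ↔ ∃ u, G u i ∧ x u = z :=
    exists_congr fun u => and_congr_right fun hu => by rw [hnbr u hu]
  classical
  unfold indepZeroCode
  rw [hi]
  exact if_congr (and_congr_right fun _ => hzeros) rfl rfl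

lemma indepZeroCode_eq_self {x : V → A} (hx : ∀ u i, G u i → x u = z → x i ≠ z) :
    indepZeroCode G z o x = x := by
  funext i
  rw [indepZeroCode, if_neg]
  rintro ⟨hi, u, hui, hu⟩
  exact hx u i hui hu hi

lemma indepZeroCode_eq_self_of_zero_subsingleton (hG : ∀ v, ¬ G v v) {x : V → A}
    (hx : ∀ u i, x u = z → x i = z → u = i) : indepZeroCode G z o x = x :=
  indepZeroCode_eq_self fun u i hui hu hi => hG i (hx u i hu hi ▸ hui)

variable [DecidableEq V]

lemma arcCF_indepZeroCode_iff (hG : ∀ v, ¬ G v v) (hzo : z ≠ o) (u i : V) :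
    arcCF (indepZeroCode G z o) u i ↔ G u i ∨ u = i := by
  constructor
  · rintro ⟨x, a, hne⟩
    by_contra! hnot
    refine hne (indepZeroCode_congr (Function.update_of_ne (Ne.symm hnot.2) a x) fun w hw => ?_)
    exact Function.update_of_ne (fun (hwu : w = u) => hnot.1 (hwu ▸ hw)) a x
  · -- The configuration whose only `z` is at `i` is fixed; writing `z` at an in-neighbour `u`,
    -- or `o` at `i` itself, changes the value at `i`.
    set x : V → A := Function.update (fun _ => o) i z
    have hx : ∀ w, x w = z → w = i := fun w hw => by
      by_contra hwi
      simp [x, Function.update_of_ne hwi, hzo.symm] at hw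
    have hfix : indepZeroCode G z o x i = z := by
      rw [indepZeroCode_eq_self_of_zero_subsingleton hG fun u v hu hv =>
        (hx u hu).trans (hx v hv).symm]
      simp [x]
    rintro (hui | rfl)
    · refine ⟨x, z, ?_⟩
      have hne : u ≠ i := by rintro rfl; exact hG u hui
      rw [hfix, indepZeroCode, if_pos]
      · exact hzo.symm
      · exact ⟨by simp [x, Function.update_of_ne hne.symm], u, hui, by simp⟩
    · refine ⟨x, o, ?_⟩
      rw [hfix, indepZeroCode, if_neg (by simp [hzo.symm])]
      simpa using hzo.symm

end IndepZeroCode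

section ZeroPatterns

variable {V A : Type*} [Fintype V] [DecidableEq V] [Fintype A] [DecidableEq A]

/-- `zerosAt z none` are the configurations without a `z`, `zerosAt z (some i)` those whose
only `z` sits at `i`. -/
def zerosAt (z : A) (s : Option V) : Finset (V → A) :=
  Fintype.piFinset fun j => if some j = s then {z} else univ.erase z

lemma mem_zerosAt {z : A} {s : Option V} {x : V → A} :
    x ∈ zerosAt z s ↔ ∀ j, x j = z ↔ some j = s := by
  refine Fintype.mem_piFinset.trans (forall_congr' fun j => ?_)
  split_ifs with h <;> simp [h]

lemma card_zerosAt_none (z : A) :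
    (zerosAt z (none : Option V)).card = (Fintype.card A - 1) ^ Fintype.card V := by
  simp [zerosAt, Fintype.card_piFinset]

lemma card_zerosAt_some (z : A) (i : V) :
    (zerosAt z (some i)).card = (Fintype.card A - 1) ^ (Fintype.card V - 1) := by
  simp only [zerosAt, Fintype.card_piFinset, Option.some_inj, apply_ite Finset.card, prod_ite,
    filter_eq', filter_ne', mem_univ, ↓reduceIte, card_singleton, prod_const_one, prod_const,
    card_erase_of_mem, card_univ, one_mul]

lemma eq_of_mem_zerosAt {z : A} {s t : Option V} {x : V → A} (hs : x ∈ zerosAt z s)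
    (ht : x ∈ zerosAt z t) : s = t := by
  rw [mem_zerosAt] at hs ht
  rcases t with _ | j
  · rcases s with _ | i
    · rfl
    · exact (ht i).1 ((hs i).2 rfl)
  · exact ((hs j).1 ((ht j).2 rfl)).symm

lemma card_biUnion_zerosAt (z : A) :
    (univ.biUnion (zerosAt (V := V) z)).card =
      Fintype.card V * (Fintype.card A - 1) ^ (Fintype.card V - 1)
        + (Fintype.card A - 1) ^ Fintype.card V := by
  rw [card_biUnion fun s _ t _ hst =>
    disjoint_left.2 fun _ hs ht => hst (eq_of_mem_zerosAt hs ht)]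
  simp [Fintype.sum_option, card_zerosAt_none, card_zerosAt_some, add_comm]

end ZeroPatterns

section MaxFixEq

variable {V : Type*} [Fintype V] [DecidableEq V]

lemma ncard_fixedPoints_le_pow {A : Type*} [Fintype A] (f : (V → A) → V → A) :
    Set.ncard {x | f x = x} ≤ Fintype.card A ^ Fintype.card V := by
  simpa using Set.ncard_le_card {x | f x = x}

lemma maxFixEq_le_pow (G : V → V → Prop) (q : ℕ) : maxFixEq G q ≤ q ^ Fintype.card V :=
  csSup_le' <| by
    rintro _ ⟨f, -, rfl⟩
    simpa using ncard_fixedPoints_le_pow f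

lemma le_maxFixEq {G : V → V → Prop} {q : ℕ} {f : (V → Fin q) → V → Fin q}
    (hf : ∀ u i, arcCF f u i ↔ G u i) : Set.ncard {x | f x = x} ≤ maxFixEq G q := by
  refine le_csSup ⟨q ^ Fintype.card V, ?_⟩ ⟨f, hf, rfl⟩
  rintro _ ⟨g, -, rfl⟩
  simpa using ncard_fixedPoints_le_pow g

lemma card_mul_add_pow_le_maxFixEq {G : V → V → Prop} (hG : ∀ v, ¬ G v v) {q : ℕ}
    (hq : 2 ≤ q) :
    Fintype.card V * (q - 1) ^ (Fintype.card V - 1) + (q - 1) ^ Fintype.card V ≤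
      maxFixEq (fun u i => G u i ∨ u = i) q := by
  let z : Fin q := ⟨0, by omega⟩
  let o : Fin q := ⟨1, by omega⟩
  have hzo : z ≠ o := by simp [z, o, Fin.ext_iff]
  have hfix : ↑(univ.biUnion (zerosAt (V := V) z)) ⊆ {x | indepZeroCode G z o x = x} := by
    intro x hx
    obtain ⟨s, -, hs⟩ := mem_biUnion.1 hx
    refine indepZeroCode_eq_self_of_zero_subsingleton hG fun u i hu hi => ?_
    exact Option.some_injective _
      (((mem_zerosAt.1 hs u).1 hu).trans ((mem_zerosAt.1 hs i).1 hi).symm)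
  calc _ = (univ.biUnion (zerosAt (V := V) z)).card := by
        rw [card_biUnion_zerosAt, Fintype.card_fin]
    _ ≤ Set.ncard {x | indepZeroCode G z o x = x} := by
        rw [← Set.ncard_coe_finset]
        exact Set.ncard_le_ncard hfix (Set.toFinite _)
    _ ≤ _ := le_maxFixEq (arcCF_indepZeroCode_iff hG hzo)

end MaxFixEq

lemma logb_natCast_le_logb_natCast {b m n : ℕ} (hb : 1 < b) (hm : 0 < m) (hmn : m ≤ n) :
    Real.logb b m ≤ Real.logb b n :=
  Real.logb_le_logb_of_le (by exact_mod_cast hb) (by exact_mod_cast hm) (by exact_mod_cast hmn)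

lemma tendsto_logb_natCast_sub_one :
    Tendsto (fun q : ℕ => Real.logb q (q - 1)) atTop (𝓝 1) := by
  have hdiff : Tendsto (fun q : ℕ => Real.log ((q : ℝ) + -1) - Real.log q) atTop (𝓝 0) :=
    (Real.tendsto_log_comp_add_sub_log (-1)).comp tendsto_natCast_atTop_atTop
  have hinv : Tendsto (fun q : ℕ => (Real.log q)⁻¹) atTop (𝓝 0) :=
    (Real.tendsto_log_atTop.comp tendsto_natCast_atTop_atTop).inv_tendsto_atTop
  have hlim := (hdiff.mul hinv).const_add 1
  rw [mul_zero, add_zero] at hlim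
  refine hlim.congr' ?_
  filter_upwards [eventually_gt_atTop 1] with q hq
  have hlog : Real.log q ≠ 0 := (Real.log_pos (by exact_mod_cast hq)).ne'
  rw [Real.logb, ← sub_eq_add_neg]
  field_simp
  ring

/-- For any loopless digraph `G` on `n` vertices and every `q ≥ 2`:
`h(G°,q) ≥ log_q( n(q−1)^{n−1} + (q−1)^n )`, where `G°` is `G` with a loop on every
vertex; consequently `h(G°,q) → n` as `q → ∞`. -/
theorem stmt15 {V : Type*} [Fintype V] [DecidableEq V] (G : V → V → Prop)
    (hG : ∀ v, ¬ G v v) :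
    (∀ q : ℕ, 2 ≤ q →
      Real.logb q (maxFixEq (fun u i => G u i ∨ u = i) q) ≥
        Real.logb q ((Fintype.card V * (q - 1) ^ (Fintype.card V - 1)
          + (q - 1) ^ Fintype.card V : ℕ))) ∧
    Filter.Tendsto
      (fun q : ℕ => Real.logb q (maxFixEq (fun u i => G u i ∨ u = i) q))
      Filter.atTop (nhds (Fintype.card V : ℝ)) := by
  set n := Fintype.card V
  have hlower (q : ℕ) (hq : 2 ≤ q) := card_mul_add_pow_le_maxFixEq hG hq
  have hpos (q : ℕ) (hq : 2 ≤ q) : 0 < (q - 1) ^ n := pow_pos (by omega) n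
  have hpow (q : ℕ) (hq : 2 ≤ q) : (q - 1) ^ n ≤ maxFixEq (fun u i => G u i ∨ u = i) q :=
    (Nat.le_add_left _ _).trans (hlower q hq)
  refine ⟨fun q hq => logb_natCast_le_logb_natCast (by omega)
    ((hpos q hq).trans_le (Nat.le_add_left _ _)) (hlower q hq), ?_⟩
  refine tendsto_of_tendsto_of_tendsto_of_le_of_le'
    (by simpa using tendsto_logb_natCast_sub_one.const_mul (n : ℝ)) tendsto_const_nhds ?_ ?_ <;>
    filter_upwards [eventually_ge_atTop 2] with q hq
  · calc n * Real.logb q (q - 1) = Real.logb q ↑((q - 1) ^ n) := by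
          rw [Nat.cast_pow, Real.logb_pow, Nat.cast_pred (by omega)]
      _ ≤ _ := logb_natCast_le_logb_natCast (by omega) (hpos q hq) (hpow q hq)
  · calc _ ≤ Real.logb q ↑(q ^ n) := logb_natCast_le_logb_natCast (by omega)
          ((hpos q hq).trans_le (hpow q hq)) (maxFixEq_le_pow _ q)
      _ = n := by
          rw [Nat.cast_pow, Real.logb_pow, Real.logb_self_eq_one (by exact_mod_cast hq), mul_one]
end

section
/- Let G be a digraph over alphabet [q] with ordered values. If there exists a non-decreasing coding function f : [q]^n → [q]^n with G(f) ⊆ G having q^{k(G)} fixed points (where k(G) is the minimum feedback vertex set size), then G contains k(G) vertex-disjoint directed cycles. -/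
/-- `I` is an acyclic set of `G`. -/
def AcyclicIn {V : Type*} (G : V → V → Prop) (I : Set V) : Prop :=
  ∀ a ∈ I, ¬ ∃ l : List V, (∀ i ∈ l, i ∈ I) ∧ List.Chain G a (l ++ [a])

/-!
If `x`, `y` are fixed points of the monotone `f` and `x w < y w`, then
`f (x ⊓ y) w ≤ x w < f y w`, so some arc `u → w` of `G(f) ⊆ G` has `x u < y u`. Thus every vertex
of `{w | x w < y w}` has an in-neighbour in that set, which therefore contains a cycle as soon as
it is nonempty. As `Sᶜ` is acyclic, `x ≤ y` on `S` forces `x ≤ y`: restriction to `S` is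
injective on the `q ^ |S|` fixed points, hence bijective. For `s ∈ S` take fixed points `up s`
and `down s` equal on `S` to the indicator of `s` and of `S \ {s}` (with values `0 < 1`). Then
`up s ≤ down t` for `s ≠ t`, so the sets `{down s < up s}` are pairwise disjoint; each contains
`s`, hence a cycle.
-/

open Function

theorem Function.periodicPts_nonempty {α : Type*} [Finite α] [Nonempty α] (f : α → α) :
    (periodicPts f).Nonempty := by
  obtain ⟨m, n, hmn, heq⟩ :=
    Finite.exists_ne_map_eq_of_infinite (fun n => f^[n] (Classical.arbitrary α))
  wlog hlt : m < n generalizing m n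
  · exact this n m hmn.symm heq.symm (by omega)
  refine ⟨f^[m] (Classical.arbitrary α), mk_mem_periodicPts (n := n - m) (by omega) ?_⟩
  rw [IsPeriodicPt, IsFixedPt, ← iterate_add_apply, Nat.sub_add_cancel hlt.le]
  exact heq.symm

theorem List.IsChain.cons_reverse_append_singleton {α : Type*} {R : α → α → Prop} {a : α}
    {l : List α} (h : List.IsChain (fun x y => R y x) (a :: (l ++ [a]))) :
    List.IsChain R (a :: (l.reverse ++ [a])) := by
  have := List.isChain_reverse.2 h
  simp only [List.reverse_cons, List.reverse_append] at this
  exact this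

theorem exists_cycle_of_forall_exists_pred {V : Type*} [Finite V] {G : V → V → Prop}
    {K : Set V} (hne : K.Nonempty) (hpred : ∀ w ∈ K, ∃ u ∈ K, G u w) :
    ∃ a l, (∀ v ∈ a :: l, v ∈ K) ∧ List.IsChain G (a :: (l ++ [a])) ∧ (a :: l).Nodup := by
  have : Nonempty K := hne.to_subtype
  choose pred hpredK hpredG using hpred
  let p : K → K := fun w => ⟨pred w w.2, hpredK w w.2⟩
  obtain ⟨x, hx⟩ := periodicPts_nonempty p
  obtain ⟨k, hk⟩ : ∃ k, minimalPeriod p x = k + 1 :=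
    Nat.exists_eq_add_one.2 (minimalPeriod_pos_of_mem_periodicPts hx)
  set l := (List.range k).map (fun n => p^[n + 1] x)
  have horbit : periodicOrbit p x = (x :: l : List K) := by
    rw [periodicOrbit_def, hk, List.range_succ_eq_map, List.map_cons, List.map_map]
    rfl
  -- `p` steps backwards along arcs, so its orbit is a cycle of the reversed graph
  have hchain : (periodicOrbit p x).Chain (fun a b : K => G b a) := by
    rw [periodicOrbit_chain' _ hx]
    intro n
    rw [iterate_succ_apply']
    exact hpredG _ _
  rw [horbit, Cycle.chain_coe_cons] at hchain
  refine ⟨x, (l.map Subtype.val).reverse, by simp +contextual, ?_, ?_⟩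
  · have := (List.isChain_map (R := fun a b => G b a) Subtype.val).2 hchain
    simp only [List.map_cons, List.map_append, List.map_nil] at this
    exact this.cons_reverse_append_singleton
  · have hnodup := nodup_periodicOrbit (f := p) (x := x)
    rw [horbit, Cycle.nodup_coe_iff] at hnodup
    simpa using hnodup.map Subtype.val_injective

theorem exists_arcCF_of_apply_ne {V A : Type*} [Fintype V] [DecidableEq V]
    (f : (V → A) → V → A) {x y : V → A} {w : V} (h : f x w ≠ f y w) :
    ∃ u, x u ≠ y u ∧ arcCF f u w := by
  suffices key : ∀ (D : Finset V) (x : V → A), (∀ u ∉ D, x u = y u) → f x w ≠ f y w →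
      ∃ u, x u ≠ y u ∧ arcCF f u w from key Finset.univ x (by simp) h
  intro D
  induction D using Finset.induction_on with
  | empty =>
    intro x hxy h
    exact absurd (by rw [funext fun u => hxy u (Finset.notMem_empty u)]) h
  | insert u D _ ih =>
    intro x hxy h
    by_cases hu : f (update x u (y u)) w = f y w
    · refine ⟨u, fun hxu => ?_, x, y u, by rwa [hu, ne_comm]⟩
      rw [← hxu, update_eq_self] at hu
      exact h hu
    · have hxy' : ∀ v ∉ D, update x u (y u) v = y v := by
        intro v hv
        by_cases hvu : v = u
        · simp [hvu]
        · rw [update_of_ne hvu]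
          exact hxy v (by simp [hvu, hv])
      obtain ⟨v, hv, harc⟩ := ih _ hxy' hu
      have hvu : v ≠ u := by rintro rfl; simp at hv
      rw [update_of_ne hvu] at hv
      exact ⟨v, hv, harc⟩


section MonotoneNetwork

variable {V A : Type*} [Fintype V] [DecidableEq V] [LinearOrder A] {G : V → V → Prop}
  {f : (V → A) → V → A} {S : Finset V}

theorem exists_lt_arc_of_fixed (hmono : Monotone f)
    (harc : ∀ u w, arcCF f u w → G u w) {x y : V → A} (hx : f x = x) (hy : f y = y)
    {w : V} (hw : x w < y w) : ∃ u, x u < y u ∧ G u w := by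
  have hne : f (x ⊓ y) w ≠ f y w := by
    refine ne_of_lt (lt_of_le_of_lt ?_ (hy ▸ hw))
    simpa [hx] using hmono (inf_le_left : x ⊓ y ≤ x) w
  obtain ⟨u, hu, huw⟩ := exists_arcCF_of_apply_ne f hne
  have hlt : (x ⊓ y) u < y u := lt_of_le_of_ne ((inf_le_right : x ⊓ y ≤ y) u) hu
  exact ⟨u, by simpa using hlt, harc u w huw⟩

theorem le_of_fixed_of_le_on_feedback (hmono : Monotone f) (harc : ∀ u w, arcCF f u w → G u w)
    (hS : AcyclicIn G (S : Set V)ᶜ) {x y : V → A} (hx : f x = x) (hy : f y = y)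
    (hxy : ∀ s ∈ S, x s ≤ y s) : x ≤ y := by
  by_contra hle
  obtain ⟨w, hw⟩ : ∃ w, y w < x w := by simpa [Pi.le_def] using hle
  obtain ⟨a, l, hK, hchain, -⟩ := exists_cycle_of_forall_exists_pred (K := {w | y w < x w})
    ⟨w, hw⟩ fun w hw => exists_lt_arc_of_fixed hmono harc hy hx hw
  have hKS : ∀ v ∈ a :: l, v ∈ (S : Set V)ᶜ := fun v hv hvS => (hK v hv).not_ge (hxy v hvS)
  exact hS a (hKS a List.mem_cons_self)
    ⟨l, fun v hv => hKS v (List.mem_cons_of_mem _ hv), hchain⟩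

theorem exists_fixed_eq_on_of_ncard_fixed [Finite A] (hmono : Monotone f)
    (harc : ∀ u w, arcCF f u w → G u w) (hS : AcyclicIn G (S : Set V)ᶜ)
    (hcard : {x | f x = x}.ncard = Nat.card A ^ S.card) (σ : V → A) :
    ∃ x, f x = x ∧ ∀ s ∈ S, x s = σ s := by
  let res : {x | f x = x} → S → A := fun x s => x.1 s
  have hle : ∀ x y : {x | f x = x}, res x = res y → x.1 ≤ y.1 := fun x y hxy =>
    le_of_fixed_of_le_on_feedback hmono harc hS x.2 y.2 fun s hs => (congrFun hxy ⟨s, hs⟩).le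
  have hinj : Injective res := fun x y hxy =>
    Subtype.ext ((hle x y hxy).antisymm (hle y x hxy.symm))
  have hsurj := (hinj.bijective_of_nat_card_le <| by
    simp [Nat.card_coe_set_eq, hcard, Nat.card_fun]).2
  obtain ⟨x, hx⟩ := hsurj fun s => σ s
  exact ⟨x.1, x.2, fun s hs => congrFun hx ⟨s, hs⟩⟩

theorem exists_disjoint_pred_closed_sets (hmono : Monotone f)
    (harc : ∀ u w, arcCF f u w → G u w) (hS : AcyclicIn G (S : Set V)ᶜ)
    (hext : ∀ σ : V → A, ∃ x, f x = x ∧ ∀ s ∈ S, x s = σ s) {a b : A} (hab : a < b) :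
    ∃ K : V → Set V, (∀ s ∈ S, s ∈ K s ∧ ∀ w ∈ K s, ∃ u ∈ K s, G u w) ∧
      ∀ s ∈ S, ∀ t ∈ S, s ≠ t → Disjoint (K s) (K t) := by
  choose up hup hupS using fun s : V => hext fun v => if v = s then b else a
  choose down hdown hdownS using fun s : V => hext fun v => if v = s then a else b
  have hcross : ∀ s t, s ≠ t → up s ≤ down t := fun s t hst =>
    le_of_fixed_of_le_on_feedback hmono harc hS (hup s) (hdown t) fun v hv => by
      rw [hupS s v hv, hdownS t v hv]
      split_ifs with hs ht <;>
        first | exact le_rfl | exact hab.le | exact absurd (hs.symm.trans ht) hst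
  refine ⟨fun s => {w | down s w < up s w}, fun s hs => ⟨?_, fun w hw => ?_⟩,
    fun s _ t _ hst => ?_⟩
  · simpa [hdownS s s hs, hupS s s hs] using hab
  · exact exists_lt_arc_of_fixed hmono harc (hdown s) (hup s) hw
  · refine Set.disjoint_left.2 fun w hws hwt => ?_
    exact lt_irrefl _ <|
      (hws.trans_le (hcross s t hst w)).trans (hwt.trans_le (hcross t s hst.symm w))

end MonotoneNetwork

theorem stmt17_general {V : Type*} [Fintype V] [DecidableEq V] (G : V → V → Prop)
    (q : ℕ) (hq : 2 ≤ q) (S : Finset V)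
    (hS : AcyclicIn G ((S : Set V))ᶜ)
    (hf : ∃ f : (V → Fin q) → V → Fin q, Monotone f ∧
      (∀ u i, arcCF f u i → G u i) ∧
      Set.ncard {x | f x = x} = q ^ S.card) :
    ∃ (a : Fin S.card → V) (l : Fin S.card → List V),
      (∀ j, List.Chain G (a j) (l j ++ [a j])) ∧
      (∀ j, (a j :: l j).Nodup) ∧
      (∀ j j', j ≠ j' → ∀ v, v ∈ a j :: l j → v ∉ a j' :: l j') := by
  obtain ⟨f, hmono, harc, hcard⟩ := hf
  have hext := exists_fixed_eq_on_of_ncard_fixed hmono harc hS (by simpa using hcard)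
  obtain ⟨K, hK, hdisj⟩ := exists_disjoint_pred_closed_sets hmono harc hS hext
    (show (⟨0, by omega⟩ : Fin q) < ⟨1, by omega⟩ from Fin.mk_lt_mk.2 one_pos)
  let s : Fin S.card → S := S.equivFin.symm
  choose a l hmem hchain hnodup using fun j =>
    exists_cycle_of_forall_exists_pred ⟨_, (hK _ (s j).2).1⟩ (hK _ (s j).2).2
  refine ⟨a, l, hchain, hnodup, fun j j' hne v hv hv' => ?_⟩
  have hs : (s j : V) ≠ s j' := fun h => hne (S.equivFin.symm.injective (Subtype.ext h))
  exact Set.disjoint_left.1 (hdisj _ (s j).2 _ (s j').2 hs) (hmem j v hv) (hmem j' v hv')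

/-- Let `S` be a minimum feedback vertex set of `G` (so `|S| = k(G)`).  If there is a
non-decreasing (monotone) coding function `f : [q]^n → [q]^n` (`q ≥ 2`) with
`G(f) ⊆ G` having `q^{k(G)}` fixed points, then `G` contains `k(G)` vertex-disjoint
directed cycles. -/
theorem stmt17 {V : Type*} [Fintype V] [DecidableEq V] (G : V → V → Prop)
    (q : ℕ) (hq : 2 ≤ q) (S : Finset V)
    (hS : AcyclicIn G ((S : Set V))ᶜ)
    (hmin : ∀ S' : Finset V, AcyclicIn G ((S' : Set V))ᶜ → S.card ≤ S'.card)
    (hf : ∃ f : (V → Fin q) → V → Fin q, Monotone f ∧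
      (∀ u i, arcCF f u i → G u i) ∧
      Set.ncard {x | f x = x} = q ^ S.card) :
    ∃ (a : Fin S.card → V) (l : Fin S.card → List V),
      (∀ j, List.Chain G (a j) (l j ++ [a j])) ∧
      (∀ j, (a j :: l j).Nodup) ∧
      (∀ j j', j ≠ j' → ∀ v, v ∈ a j :: l j → v ∉ a j' :: l j') :=
  stmt17_general G q hq S hS hf
end

section
/- Let f be a linear coding function over a commutative ring, let I be an acyclic set of G(f), and let u, v be vertices not in I such that (u,v) is an arc of G(f) but not of G(f^{-I}). Then G(f) contains a path from u to v whose internal vertices all lie in I. -/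
/-- The `v`-reduction of a coding function. -/
def reduceCF {V A : Type*} [DecidableEq V] (f : (V → A) → V → A) (v : V) :
    (V → A) → V → A :=
  fun x i => if i = v then x i else f (Function.update x v (f x v)) i

/-- Path from `u` to `w` with all internal vertices in `I` (at least one). -/
def PathThrough {V : Type*} (G : V → V → Prop) (I : Set V) (u w : V) : Prop :=
  ∃ l : List V, l ≠ [] ∧ l.Nodup ∧ (∀ i ∈ l, i ∈ I) ∧ List.Chain G u (l ++ [w])

/-!
Reducing the linear function `x ↦ b x` along `w` gives again a linear function: its matrix
`reduceMatrix b w` has the unit row at `w` and, for `i ≠ w`, entries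
`b i j + b i w * b w j` (`j ≠ w`) and `0` (`j = w`). Reducing along the enumeration of `I`
one vertex at a time, every nonzero entry `b i j` of a row not yet reduced is witnessed by a
walk `j → ⋯ → i` of `G(f)` through the vertices already reduced. If `G(f)` had no path from `u`
to `v` through `I`, every correction `b v w * b w u` would vanish, because a nonzero one yields
walks `u → ⋯ → w → ⋯ → v` through `I`, and these are paths since `I` is acyclic. So the entry
`(v, u)` of the matrix of `f^{-I}` would still be `a v u ≠ 0`, i.e. `(u, v)` would be an arc
of `G(f^{-I})`.
-/

open Matrix

section Walks

variable {V : Type*} {G : V → V → Prop}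

def WalkThrough (G : V → V → Prop) (P : Set V) (j i : V) : Prop :=
  ∃ l : List V, (∀ x ∈ l, x ∈ P) ∧ List.IsChain G (j :: (l ++ [i]))

theorem WalkThrough.mono {P Q : Set V} {j i : V} (h : WalkThrough G P j i) (hPQ : P ⊆ Q) :
    WalkThrough G Q j i :=
  let ⟨l, hl, hc⟩ := h
  ⟨l, fun x hx => hPQ (hl x hx), hc⟩

theorem WalkThrough.trans_insert {P : Set V} {j w i : V} (h₁ : WalkThrough G P j w)
    (h₂ : WalkThrough G P w i) : WalkThrough G (insert w P) j i := by
  obtain ⟨l₁, hl₁, hc₁⟩ := h₁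
  obtain ⟨l₂, hl₂, hc₂⟩ := h₂
  refine ⟨l₁ ++ w :: l₂, ?_, ?_⟩
  · intro x hx
    simp only [List.mem_append, List.mem_cons] at hx
    rcases hx with hx | rfl | hx
    exacts [Set.mem_insert_of_mem w (hl₁ x hx), Set.mem_insert x P,
      Set.mem_insert_of_mem w (hl₂ x hx)]
  · simpa using List.isChain_cons_split.mpr ⟨hc₁, hc₂⟩

theorem AcyclicIn.nodup_of_isChain {I : Set V} (hI : AcyclicIn G I) {l : List V}
    (hl : ∀ x ∈ l, x ∈ I) {j i : V} (hc : List.IsChain G (j :: (l ++ [i]))) : l.Nodup := by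
  refine List.nodup_iff_sublist.mpr fun x hxx => ?_
  obtain ⟨r₁, r₂, rfl, hx₁, hx₂⟩ := List.cons_sublist_iff.mp hxx
  obtain ⟨s₁, t₁, rfl⟩ := List.append_of_mem hx₁
  obtain ⟨s₂, t₂, rfl⟩ := List.append_of_mem (List.singleton_sublist.mp hx₂)
  have hcycle : List.IsChain G (x :: ((t₁ ++ s₂) ++ [x])) := by
    refine hc.infix ⟨j :: s₁, t₂ ++ [i], ?_⟩
    simp
  exact hI x (hl x (by simp)) ⟨t₁ ++ s₂, fun y hy => hl y (by simp at hy ⊢; tauto), hcycle⟩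

theorem AcyclicIn.pathThrough {I : Set V} (hI : AcyclicIn G I) {j w i : V} (hw : w ∈ I)
    (h₁ : WalkThrough G I j w) (h₂ : WalkThrough G I w i) : PathThrough G I j i := by
  obtain ⟨l₁, hl₁, hc₁⟩ := h₁
  obtain ⟨l₂, hl₂, hc₂⟩ := h₂
  have hl : ∀ x ∈ l₁ ++ w :: l₂, x ∈ I := by
    intro x hx
    simp only [List.mem_append, List.mem_cons] at hx
    rcases hx with hx | rfl | hx
    exacts [hl₁ x hx, hw, hl₂ x hx]
  have hc : List.IsChain G (j :: ((l₁ ++ w :: l₂) ++ [i])) := by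
    simpa using List.isChain_cons_split.mpr ⟨hc₁, hc₂⟩
  exact ⟨_, by simp, hI.nodup_of_isChain hl hc, hl, hc⟩

end Walks

section Linear

variable {V R : Type*} [DecidableEq V] [Semiring R]

def reduceMatrix (b : Matrix V V R) (w : V) : Matrix V V R :=
  fun i => if i = w then Pi.single w 1 else Function.update (b i) w 0 + b i w • b w

theorem reduceMatrix_apply_of_ne (b : Matrix V V R) {w i : V} (hi : i ≠ w) (j : V) :
    reduceMatrix b w i j = Function.update (b i) w 0 j + b i w * b w j := by
  simp [reduceMatrix, hi]

variable [Fintype V]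

theorem dotProduct_update (r x : V → R) (w : V) (c : R) :
    r ⬝ᵥ Function.update x w c = Function.update r w 0 ⬝ᵥ x + r w * c := by
  simp only [dotProduct, Fintype.sum_eq_add_sum_compl w, Function.update_self, zero_mul,
    zero_add, add_comm (r w * c)]
  congr 1
  refine Finset.sum_congr rfl fun j hj => ?_
  rw [Function.update_of_ne (by simpa using hj), Function.update_of_ne (by simpa using hj)]

theorem arcCF_mulVec_iff (b : Matrix V V R) (u v : V) :
    arcCF (fun x => b *ᵥ x) u v ↔ b v u ≠ 0 := by
  have hupd (x : V → R) (c : R) :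
      (b *ᵥ Function.update x u c) v = Function.update (b v) u 0 ⬝ᵥ x + b v u * c :=
    dotProduct_update (b v) x u c
  have hself (x : V → R) : (b *ᵥ x) v = Function.update (b v) u 0 ⬝ᵥ x + b v u * x u := by
    rw [← hupd, Function.update_eq_self]
  simp only [arcCF, hupd, hself]
  constructor
  · rintro ⟨x, c, hne⟩ hzero
    simp [hzero] at hne
  · intro hne
    exact ⟨0, 1, by simpa using hne⟩

theorem reduceCF_mulVec (b : Matrix V V R) (w : V) :
    reduceCF (fun x => b *ᵥ x) w = fun x => reduceMatrix b w *ᵥ x := by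
  funext x i
  by_cases hi : i = w
  · subst hi
    simp [reduceCF, reduceMatrix, mulVec]
  · simp only [reduceCF, reduceMatrix, if_neg hi, mulVec, dotProduct_update, add_dotProduct,
      smul_dotProduct, smul_eq_mul]

theorem foldl_reduceCF_mulVec (t : List V) (b : Matrix V V R) :
    t.foldl reduceCF (fun x => b *ᵥ x) = fun x => t.foldl reduceMatrix b *ᵥ x := by
  induction t generalizing b with
  | nil => rfl
  | cons w t ih => simp only [List.foldl_cons, reduceCF_mulVec, ih]

end Linear

section Support

variable {V R : Type*} [Semiring R] {G : V → V → Prop}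

def WalkSupported (G : V → V → Prop) (P : Set V) (b : Matrix V V R) : Prop :=
  ∀ i j, i ∉ P → b i j ≠ 0 → WalkThrough G P j i

theorem walkSupported_empty (b : Matrix V V R) : WalkSupported (fun j i => b i j ≠ 0) ∅ b :=
  fun _ _ _ hne => ⟨[], by simp, List.isChain_pair.mpr hne⟩

variable [DecidableEq V]

theorem WalkSupported.reduceMatrix {P : Set V} {b : Matrix V V R} (h : WalkSupported G P b)
    {w : V} (hw : w ∉ P) : WalkSupported G (insert w P) (reduceMatrix b w) := by
  intro i j hi hne
  simp only [Set.mem_insert_iff, not_or] at hi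
  obtain ⟨hiw, hiP⟩ := hi
  rw [reduceMatrix_apply_of_ne b hiw] at hne
  rcases eq_or_ne (b i w * b w j) 0 with hprod | hprod
  · rw [hprod, add_zero] at hne
    have hjw : j ≠ w := by
      rintro rfl
      simp at hne
    rw [Function.update_of_ne hjw] at hne
    exact (h i j hiP hne).mono (Set.subset_insert w P)
  · exact (h w j hw (right_ne_zero_of_mul hprod)).trans_insert
      (h i w hiP (left_ne_zero_of_mul hprod))

theorem foldl_reduceMatrix_apply_eq {I : Set V} (hI : AcyclicIn G I) {u v : V} (hu : u ∉ I)
    (hv : v ∉ I) (huv : ¬ PathThrough G I u v) {t : List V} (ht : t.Nodup) {P : Set V}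
    (htP : ∀ w ∈ t, w ∈ I ∧ w ∉ P) (hPI : P ⊆ I) {b : Matrix V V R}
    (hb : WalkSupported G P b) : (t.foldl reduceMatrix b) v u = b v u := by
  induction t generalizing P b with
  | nil => rfl
  | cons w t ih =>
    obtain ⟨hwI, hwP⟩ := htP w List.mem_cons_self
    have hprod : b v w * b w u = 0 := by
      by_contra hprod
      have hwu := hb w u hwP (right_ne_zero_of_mul hprod)
      have hvw := hb v w (fun h => hv (hPI h)) (left_ne_zero_of_mul hprod)
      exact huv (hI.pathThrough hwI (hwu.mono hPI) (hvw.mono hPI))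
    have hstep : reduceMatrix b w v u = b v u := by
      rw [reduceMatrix_apply_of_ne b (ne_of_mem_of_not_mem hwI hv).symm,
        Function.update_of_ne (ne_of_mem_of_not_mem hwI hu).symm, hprod, add_zero]
    have htP' : ∀ x ∈ t, x ∈ I ∧ x ∉ insert w P := by
      intro x hx
      obtain ⟨hxI, hxP⟩ := htP x (List.mem_cons_of_mem w hx)
      refine ⟨hxI, ?_⟩
      rintro (rfl | hxP')
      exacts [(List.nodup_cons.mp ht).1 hx, hxP hxP']
    rw [List.foldl_cons, ih ht.of_cons htP' (Set.insert_subset hwI hPI) (hb.reduceMatrix hwP),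
      hstep]

end Support

theorem stmt18_general {V : Type*} [Fintype V] [DecidableEq V]
    {R : Type*} [CommRing R]
    (a : V → V → R)
    (I : Set V) (hI : AcyclicIn (fun u i => a i u ≠ 0) I)
    (s : List V) (hnd : s.Nodup) (hs : ∀ w, w ∈ s ↔ w ∈ I)
    (u v : V) (hu : u ∉ I) (hv : v ∉ I) (harc : a v u ≠ 0)
    (hno : ¬ arcCF (List.foldl reduceCF (fun x i => ∑ w, a i w * x w) s) u v) :
    PathThrough (fun p w => a w p ≠ 0) I u v := by
  by_contra hpath
  have hentry : (s.foldl reduceMatrix a) v u = a v u :=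
    foldl_reduceMatrix_apply_eq hI hu hv hpath hnd (fun w hw => ⟨(hs w).mp hw, Set.notMem_empty w⟩)
      (Set.empty_subset I) (walkSupported_empty a)
  have hlin : List.foldl reduceCF (fun x i => ∑ w, a i w * x w) s =
      fun x => s.foldl reduceMatrix a *ᵥ x :=
    foldl_reduceCF_mulVec s a
  rw [hlin, arcCF_mulVec_iff, hentry] at hno
  exact hno harc

/-- Let `f` be a linear coding function over a finite commutative ring `R`, i.e.
`f_i(x) = Σ_w a_{i,w} x_w` where every nonzero coefficient is invertible, with
interaction graph `G(f)` given by arcs `(u,i)` with `a_{i,u} ≠ 0`.  Let `I` be an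
acyclic set of `G(f)` and `u, v ∉ I` with `(u,v)` an arc of `G(f)` but not of
`G(f^{-I})` (where `f^{-I}` is obtained by reducing along any enumeration `s` of
`I`).  Then `G(f)` contains a path from `u` to `v` whose internal vertices all lie
in `I`. -/
theorem stmt18 {V : Type*} [Fintype V] [DecidableEq V]
    {R : Type*} [CommRing R] [Fintype R]
    (a : V → V → R) (ha : ∀ i u, a i u = 0 ∨ IsUnit (a i u))
    (I : Set V) (hI : AcyclicIn (fun u i => a i u ≠ 0) I)
    (s : List V) (hnd : s.Nodup) (hs : ∀ w, w ∈ s ↔ w ∈ I)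
    (u v : V) (hu : u ∉ I) (hv : v ∉ I) (harc : a v u ≠ 0)
    (hno : ¬ arcCF (List.foldl reduceCF (fun x i => ∑ w, a i w * x w) s) u v) :
    PathThrough (fun p w => a w p ≠ 0) I u v :=
  stmt18_general a I hI s hnd hs u v hu hv harc hno
end
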